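/- For natural numbers m < n, (B^m B) ∘ (B^n B) is βη-equivalent to (B^{n+1} B) ∘ (B^m B), where e1 ∘ e2 denotes B e1 e2 and B^k denotes k-fold application B(B(...(B ·))). -/

import Mathlib

/-- Untyped lambda terms in de Bruijn representation. -/
inductive Lam where
  | var : Nat → Lam
  | app : Lam → Lam → Lam
  | lam : Lam → Lam
deriving DecidableEq

namespace Lam

/-- Lift (shift by one) all free variables with index ≥ `c`. -/
def lift (c : Nat) : Lam → Lam
  | var n => if n < c then var n else var (n + 1)
  | app a b => app (lift c a) (lift c b)
  | lam a => lam (lift (c + 1) a)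

/-- Substitute `s` for the free variable with index `d`. -/
def subst (d : Nat) (s : Lam) : Lam → Lam
  | var n => if n = d then s else if d < n then var (n - 1) else var n
  | app a b => app (subst d s a) (subst d s b)
  | lam a => lam (subst (d + 1) (lift 0 s) a)

/-- One-step βη-reduction (compatible closure of β and η). -/
inductive Step : Lam → Lam → Prop
  | beta (a b : Lam) : Step (app (lam a) b) (subst 0 b a)
  | eta (a : Lam) : Step (lam (app (lift 0 a) (var 0))) a
  | appL {a a' : Lam} (b : Lam) : Step a a' → Step (app a b) (app a' b)
  | appR (a : Lam) {b b' : Lam} : Step b b' → Step (app a b) (app a b')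
  | xi {a a' : Lam} : Step a a' → Step (lam a) (lam a')

/-- βη-equivalence: the equivalence relation generated by one-step βη-reduction. -/
def BetaEtaEq (a b : Lam) : Prop := Relation.EqvGen Step a b

/-- The B combinator λf.λg.λx. f (g x). -/
def B : Lam := lam (lam (lam (app (var 2) (app (var 1) (var 0)))))

/-- `flat X n` is the (n+1)-fold flat left application, i.e. `X_(n+1)`:
`flat X 0 = X = X_(1)` and `flat X (n+1) = (flat X n) X = X_(n+2)`. -/
def flat (X : Lam) : Nat → Lam
  | 0 => X
  | n + 1 => app (flat X n) X

end Lam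

open Lam

/-- `bpow k e` is the k-fold application B (B (… (B e)…)). -/
def bpow : ℕ → Lam → Lam
  | 0, e => e
  | k + 1, e => app B (bpow k e)

/-- Composition e1 ∘ e2 = B e1 e2. -/
def comp (a b : Lam) : Lam := app (app B a) b

/-!
`B` is functorial for composition, `B (a ∘ b) = B a ∘ B b`, so for `0 < m` the swap for `(m, n)`
is `B` applied to the swap for `(m - 1, n - 1)`. This reduces everything to `m = 0`, that is
`B ∘ B c = B (B c) ∘ B`: applied to `f` and `x`, the two sides become `(c ∘ f) ∘ x` and
`c ∘ (f ∘ x)`, which agree by associativity of `∘`.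
-/

namespace Lam

infix:50 " =βη " => BetaEtaEq

theorem lift_lift_of_le (t : Lam) {c c' : ℕ} (h : c ≤ c') :
    lift c (lift c' t) = lift (c' + 1) (lift c t) := by
  induction t generalizing c c' with
  | var n =>
    by_cases hc' : n < c' <;> by_cases hc : n < c <;>
      simp only [lift, hc, hc', if_true, if_false] <;> split_ifs <;> first | rfl | omega
  | app a b iha ihb => simp only [lift, iha h, ihb h]
  | lam a ih => simp only [lift, ih (Nat.add_le_add_right h 1)]

@[simp]
theorem subst_lift (t : Lam) (d : ℕ) (s : Lam) : subst d s (lift d t) = t := by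
  induction t generalizing d s with
  | var n =>
    by_cases hn : n < d
    · simp [lift, subst, hn, hn.ne, hn.not_gt]
    · simp [lift, subst, hn, show n + 1 ≠ d by omega, show d < n + 1 by omega]
  | app a b iha ihb => simp only [lift, subst, iha, ihb]
  | lam a ih => simp only [lift, subst, ih]

theorem lift_B (c : ℕ) : lift c B = B := rfl

namespace BetaEtaEq

theorem refl (a : Lam) : a =βη a := Relation.EqvGen.refl a

theorem symm {a b : Lam} (h : a =βη b) : b =βη a := Relation.EqvGen.symm a b h

theorem trans {a b c : Lam} (hab : a =βη b) (hbc : b =βη c) : a =βη c :=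
  Relation.EqvGen.trans a b c hab hbc

instance : Trans BetaEtaEq BetaEtaEq BetaEtaEq := ⟨trans⟩

theorem of_step {a b : Lam} (h : Step a b) : a =βη b := Relation.EqvGen.rel a b h

theorem map {f : Lam → Lam} (hf : ∀ {x y}, Step x y → Step (f x) (f y)) {a b : Lam}
    (h : a =βη b) : f a =βη f b := by
  induction h with
  | rel x y hxy => exact of_step (hf hxy)
  | refl x => exact refl _
  | symm x y _ ih => exact ih.symm
  | trans x y z _ _ ihxy ihyz => exact ihxy.trans ihyz

theorem lam {a b : Lam} (h : a =βη b) : .lam a =βη .lam b := map .xi h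

theorem app {a a' b b' : Lam} (ha : a =βη a') (hb : b =βη b') :
    .app a b =βη .app a' b' :=
  (map (.appL b) ha).trans (map (.appR a') hb)

theorem app_left {a a' : Lam} (b : Lam) (ha : a =βη a') :
    .app a b =βη .app a' b := ha.app (refl b)

theorem app_right (a : Lam) {b b' : Lam} (hb : b =βη b') :
    .app a b =βη .app a b' := (refl a).app hb

theorem beta (a b : Lam) : .app (.lam a) b =βη subst 0 b a := of_step (.beta a b)

theorem of_app_var_zero {X Y : Lam}
    (h : .app (lift 0 X) (var 0) =βη .app (lift 0 Y) (var 0)) : X =βη Y :=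
  (of_step (.eta X)).symm.trans (h.lam.trans (of_step (.eta Y)))

theorem of_app_var_one_var_zero {X Y : Lam}
    (h : .app (.app (lift 0 (lift 0 X)) (var 1)) (var 0) =βη
      .app (.app (lift 0 (lift 0 Y)) (var 1)) (var 0)) : X =βη Y :=
  of_app_var_zero (of_app_var_zero h)

end BetaEtaEq

theorem B_app_app_app (f g x : Lam) :
    app (app (app B f) g) x =βη app f (app g x) := by
  have hf : subst 0 f (lam (lam (app (var 2) (app (var 1) (var 0))))) =
      lam (lam (app (lift 0 (lift 0 f)) (app (var 1) (var 0)))) := by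
    simp [subst]
  have hg : subst 0 g (lam (app (lift 0 (lift 0 f)) (app (var 1) (var 0)))) =
      lam (app (lift 0 f) (app (lift 0 g) (var 0))) := by
    simp [subst, lift_lift_of_le f le_rfl]
  have hx : subst 0 x (app (lift 0 f) (app (lift 0 g) (var 0))) = app f (app g x) := by
    simp [subst]
  calc app (app (app B f) g) x
      =βη app (app (lam (lam (app (lift 0 (lift 0 f)) (app (var 1) (var 0))))) g) x :=
        hf ▸ ((BetaEtaEq.beta _ f).app_left g).app_left x
    _ =βη app (lam (app (lift 0 f) (app (lift 0 g) (var 0)))) x :=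
        hg ▸ (BetaEtaEq.beta _ g).app_left x
    _ =βη app f (app g x) := hx ▸ BetaEtaEq.beta _ x

end Lam

open Lam

theorem comp_app (a b x : Lam) : app (comp a b) x =βη app a (app b x) := B_app_app_app a b x

theorem comp_assoc (a b c : Lam) : comp (comp a b) c =βη comp a (comp b c) := by
  apply BetaEtaEq.of_app_var_zero
  simp only [comp, lift, lift_B]
  set x := var 0
  calc app (comp (comp (lift 0 a) (lift 0 b)) (lift 0 c)) x
      =βη app (lift 0 a) (app (lift 0 b) (app (lift 0 c) x)) :=
        (comp_app _ _ _).trans (comp_app _ _ _)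
    _ =βη app (comp (lift 0 a) (comp (lift 0 b) (lift 0 c))) x :=
        ((comp_app _ _ _).trans ((comp_app _ _ _).app_right _)).symm

theorem B_comp (a b : Lam) : app B (comp a b) =βη comp (app B a) (app B b) := by
  apply BetaEtaEq.of_app_var_one_var_zero
  simp only [comp, lift, lift_B]
  set a' := lift 0 (lift 0 a)
  set b' := lift 0 (lift 0 b)
  set f := var 1
  set x := var 0
  have hL : app (app (app B (comp a' b')) f) x =βη app a' (app b' (app f x)) :=
    (B_app_app_app _ _ _).trans (comp_app _ _ _)
  have hR : app (app (comp (app B a') (app B b')) f) x =βη app a' (app b' (app f x)) :=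
    calc app (app (comp (app B a') (app B b')) f) x
        =βη app (app (app B a') (app (app B b') f)) x := (comp_app _ _ _).app_left x
      _ =βη app a' (app (app (app B b') f) x) := B_app_app_app _ _ _
      _ =βη app a' (app b' (app f x)) := (B_app_app_app _ _ _).app_right a'
  exact hL.trans hR.symm

theorem comp_B_app_B_swap (c : Lam) : comp B (app B c) =βη comp (app B (app B c)) B := by
  apply BetaEtaEq.of_app_var_one_var_zero
  simp only [comp, lift, lift_B]
  set c' := lift 0 (lift 0 c)
  set f := var 1
  set x := var 0
  have hL : app (app (comp B (app B c')) f) x =βη comp (comp c' f) x :=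
    (comp_app _ _ _).app_left x
  have hR : app (app (comp (app B (app B c')) B) f) x =βη comp c' (comp f x) :=
    ((comp_app _ _ _).app_left x).trans (B_app_app_app _ _ _)
  exact hL.trans ((comp_assoc _ _ _).trans hR.symm)

/-- Swap rule: for m < n, (B^m B) ∘ (B^n B) is βη-equivalent to (B^{n+1} B) ∘ (B^m B). -/
theorem stmt14 (m n : ℕ) (h : m < n) :
    BetaEtaEq (comp (bpow m B) (bpow n B))
      (comp (bpow (n + 1) B) (bpow m B)) := by
  obtain ⟨k, rfl⟩ : ∃ k, n = k + 1 := ⟨n - 1, by omega⟩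
  induction m generalizing k with
  | zero => exact comp_B_app_B_swap (bpow k B)
  | succ m ih =>
    obtain ⟨k, rfl⟩ : ∃ k', k = k' + 1 := ⟨k - 1, by omega⟩
    calc comp (bpow (m + 1) B) (bpow (k + 1 + 1) B)
        =βη app B (comp (bpow m B) (bpow (k + 1) B)) := (B_comp _ _).symm
      _ =βη app B (comp (bpow (k + 1 + 1) B) (bpow m B)) := (ih k (by omega)).app_right B
      _ =βη comp (bpow (k + 1 + 1 + 1) B) (bpow (m + 1) B) := B_comp _ _
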